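/- arXiv:1710.09071 — 3 statements merged into one kernel-verified Lean document; each statement's English description precedes it below -/
import Mathlib

section
/- (Marsden's identity) Let (t_i) be a knot sequence and B_{j,k} the B-splines of order k defined by the standard recurrence. For any α ∈ ℝ and x in the basic interval, (x - α)^{k-1} = Σ_j ψ_{j,k}(α)·B_{j,k}(x), where ψ_{j,k}(α) = (t_{j+1} - α)(t_{j+2} - α)···(t_{j+k-1} - α) and ψ_{j,1}(α) = 1. -/
/-- B-splines of order `k` for the knot sequence `t`, defined by the standard
recurrence: `Bspl t j 1` is the indicator of `[t j, t (j+1))` and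
`Bspl t j (k+1) = ω_{j,k+1}·Bspl t j k + (1 − ω_{j+1,k+1})·Bspl t (j+1) k`. -/
noncomputable def Bspl (t : ℕ → ℝ) : ℕ → ℕ → ℝ → ℝ
  | _, 0, _ => 0
  | j, 1, x => if t j ≤ x ∧ x < t (j+1) then 1 else 0
  | j, (k+2), x =>
      ((x - t j) / (t (j+k+1) - t j)) * Bspl t j (k+1) x
        + ((t (j+k+2) - x) / (t (j+k+2) - t (j+1))) * Bspl t (j+1) (k+1) x

/-!
Marsden's identity is proved by induction on the order. Raising the order by one turns
`∑ c_j B_{j,k+1}` into `∑ (ω_{j,k+1} c_j + (1 - ω_{j,k+1}) c_{j-1}) B_{j,k}`, the boundary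
terms vanishing on the basic interval. For `c_j = ψ_{j,k+1}(α)` the blended coefficient is
`ψ_{j,k}(α)` times the linear interpolation of `t ↦ t - α` between `t_j` and `t_{j+k}`,
evaluated at `x`, i.e. `(x - α) ψ_{j,k}(α)`.
-/

open Finset

/-- `marsdenPsi t j n α` is the paper's `ψ_{j,n+1}(α)`. -/
def marsdenPsi (t : ℕ → ℝ) (j n : ℕ) (α : ℝ) : ℝ :=
  ∏ i ∈ range n, (t (j + 1 + i) - α)

namespace Bspl

variable {t : ℕ → ℝ} {j k : ℕ} {x : ℝ}

theorem eq_zero_of_notMem (hmono : Monotone t) (hx : x ∉ Set.Ico (t j) (t (j + k))) :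
    Bspl t j k x = 0 := by
  induction j, k, x using Bspl.induct t with
  | case1 => rfl
  | case2 j x hmem => exact absurd hmem hx
  | case3 j x hnot => exact if_neg hnot
  | case4 j k x ih₁ ih₂ =>
    have h₁ : Bspl t j (k + 1) x = 0 :=
      ih₁ fun h => hx (Set.Ico_subset_Ico le_rfl (hmono (by omega)) h)
    have h₂ : Bspl t (j + 1) (k + 1) x = 0 :=
      ih₂ fun h => hx (Set.Ico_subset_Ico (hmono (by omega)) (hmono (by omega)) h)
    rw [Bspl.eq_3, h₁, h₂]
    ring

theorem mem_Ico_of_ne_zero (hmono : Monotone t) (h : Bspl t j k x ≠ 0) :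
    x ∈ Set.Ico (t j) (t (j + k)) := by
  by_contra hx
  exact h (eq_zero_of_notMem hmono hx)

theorem sum_range_one (hmono : Monotone t) (M : ℕ) :
    ∑ j ∈ range M, Bspl t j 1 x = if t 0 ≤ x ∧ x < t M then 1 else 0 := by
  induction M with
  | zero => simp
  | succ M ih =>
    have h₀ : t 0 ≤ t M := hmono M.zero_le
    have h₁ : t M ≤ t (M + 1) := hmono M.le_succ
    rw [sum_range_succ, ih]
    change _ + (if t M ≤ x ∧ x < t (M + 1) then 1 else 0) = _
    split_ifs <;> grind

/-- The coefficient `c (j - 1)` is junk at `j = 0`, where `B_{0,n+1}(x) = 0`. -/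
theorem sum_mul_succ_succ (hmono : Monotone t) (c : ℕ → ℝ) {n M : ℕ}
    (hx₁ : t (n + 1) ≤ x) (hx₂ : x < t M) :
    ∑ j ∈ range M, c j * Bspl t j (n + 2) x =
      ∑ j ∈ range (M + 1),
        ((x - t j) * c j + (t (j + n + 1) - x) * c (j - 1)) / (t (j + n + 1) - t j) *
          Bspl t j (n + 1) x := by
  have hlast : Bspl t M (n + 1) x = 0 :=
    eq_zero_of_notMem hmono fun h => (h.1.trans_lt hx₂).false
  have hfirst : Bspl t 0 (n + 1) x = 0 :=
    eq_zero_of_notMem hmono fun h => (h.2.trans_le (by simpa using hx₁)).false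
  simp only [add_div, add_mul, sum_add_distrib]
  rw [sum_range_succ, hlast, sum_range_succ', hfirst]
  simp only [mul_zero, add_zero, Nat.add_sub_cancel]
  rw [← sum_add_distrib]
  refine sum_congr rfl fun j _ => ?_
  rw [Bspl.eq_3, show j + 1 + n + 1 = j + n + 2 by omega]
  ring

end Bspl

section marsdenPsi

variable {t : ℕ → ℝ} {j n : ℕ} {α : ℝ}

theorem marsdenPsi_zero : marsdenPsi t j 0 α = 1 :=
  prod_range_zero _

theorem marsdenPsi_succ : marsdenPsi t j (n + 1) α = marsdenPsi t j n α * (t (j + n + 1) - α) := by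
  rw [marsdenPsi, prod_range_succ, add_right_comm]
  rfl

theorem marsdenPsi_succ' :
    marsdenPsi t j (n + 1) α = (t (j + 1) - α) * marsdenPsi t (j + 1) n α := by
  rw [marsdenPsi, prod_range_succ', mul_comm, marsdenPsi]
  simp only [add_zero, add_assoc, add_comm 1]

theorem marsdenPsi_blend (x : ℝ) (hj : j ≠ 0) (hknots : t (j + n + 1) ≠ t j) :
    ((x - t j) * marsdenPsi t j (n + 1) α + (t (j + n + 1) - x) * marsdenPsi t (j - 1) (n + 1) α) /
        (t (j + n + 1) - t j) =
      (x - α) * marsdenPsi t j n α := by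
  obtain ⟨i, rfl⟩ := Nat.exists_eq_add_one_of_ne_zero hj
  rw [marsdenPsi_succ, Nat.add_sub_cancel, marsdenPsi_succ',
    div_eq_iff (sub_ne_zero.mpr hknots)]
  ring

end marsdenPsi

theorem pow_sub_eq_sum_marsdenPsi_mul_Bspl {t : ℕ → ℝ} (hmono : Monotone t) (α : ℝ) :
    ∀ (n M : ℕ) {x : ℝ}, t n ≤ x → x < t M →
      (x - α) ^ n = ∑ j ∈ range M, marsdenPsi t j n α * Bspl t j (n + 1) x
  | 0, M, x, hx₁, hx₂ => by
    rw [pow_zero]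
    simp only [marsdenPsi_zero, one_mul, Bspl.sum_range_one hmono, if_pos (And.intro hx₁ hx₂)]
  | n + 1, M, x, hx₁, hx₂ => by
    have ih := pow_sub_eq_sum_marsdenPsi_mul_Bspl hmono α n (M + 1)
      ((hmono n.le_succ).trans hx₁) (hx₂.trans_le (hmono M.le_succ))
    rw [Bspl.sum_mul_succ_succ hmono _ hx₁ hx₂, pow_succ', ih, mul_sum]
    refine sum_congr rfl fun j _ => ?_
    by_cases hB : Bspl t j (n + 1) x = 0
    · simp [hB]
    obtain ⟨hjx, hxj⟩ := Bspl.mem_Ico_of_ne_zero hmono hB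
    have hj : j ≠ 0 := by
      rintro rfl
      exact (hx₁.trans_lt (by simpa using hxj)).false
    rw [marsdenPsi_blend x hj (hjx.trans_lt hxj).ne']
    ring

theorem stmt_10_general (t : ℕ → ℝ) (hmono : Monotone t) (N k : ℕ) (hk : 1 ≤ k)
    (α : ℝ) :
    ∀ x ∈ Set.Ico (t (k-1)) (t (N-k+1)),
      (x - α) ^ (k-1) =
        ∑ j ∈ Finset.range (N - k + 1),
          (∏ i ∈ Finset.range (k-1), (t (j+1+i) - α)) * Bspl t j k x := by
  rintro x ⟨hx₁, hx₂⟩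
  obtain ⟨n, rfl⟩ := Nat.exists_eq_add_of_le' hk
  exact pow_sub_eq_sum_marsdenPsi_mul_Bspl hmono α n (N - (n + 1) + 1) hx₁ hx₂

theorem stmt_10 (t : ℕ → ℝ) (hmono : Monotone t) (N k : ℕ) (hk : 1 ≤ k) (hkN : k ≤ N)
    (α : ℝ) :
    ∀ x ∈ Set.Ico (t (k-1)) (t (N-k+1)),
      (x - α) ^ (k-1) =
        ∑ j ∈ Finset.range (N - k + 1),
          (∏ i ∈ Finset.range (k-1), (t (j+1+i) - α)) * Bspl t j k x :=
  stmt_10_general t hmono N k hk α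
end

section
/- (Derivative of a B-spline) For B-splines of order k > 1 with strictly increasing knots t_j < ... < t_{j+k}, on the open interval (t_j, t_{j+k}) one has (d/dθ)B_{j,k}(θ) = (k-1)·( B_{j,k-1}(θ)/(t_{j+k-1} - t_j) − B_{j+1,k-1}(θ)/(t_{j+k} - t_{j+1}) ), at every point θ where both lower-order B-splines are differentiable. -/
/-! Off the knots the formula follows by induction on the order: the product rule applied to the
recurrence gives the weights times the derivatives of the two lower-order splines, and expanding
those once more by the recurrence collapses the sum to the claimed form. At an arbitrary point
`θ`, differentiability of the lower-order splines makes both `B_{j,k}` and the right-hand side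
continuous at `θ`; since the knots are isolated, the off-knot formula holds on a punctured
neighbourhood of `θ`, and a derivative that extends continuously to a point of continuity is the
derivative there. -/

open Filter Topology Set

/-- The punctured-neighbourhood version of `hasDerivAt_of_hasDerivAt_of_ne`. -/
theorem hasDerivAt_of_eventually_hasDerivAt_of_ne {E : Type*} [NormedAddCommGroup E]
    [NormedSpace ℝ E] {f g : ℝ → E} {x : ℝ} (f_diff : ∀ᶠ y in 𝓝[≠] x, HasDerivAt f (g y) y)
    (hf : ContinuousAt f x) (hg : ContinuousAt g x) : HasDerivAt f (g x) x := by
  have diff : DifferentiableOn ℝ f {y | HasDerivAt f (g y) y} := fun y hy =>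
    hy.differentiableAt.differentiableWithinAt
  have lim {l : Filter ℝ} (hl : l ≤ 𝓝[≠] x) : Tendsto (deriv f) l (𝓝 (g x)) :=
    (hg.tendsto.mono_left (hl.trans nhdsWithin_le_nhds)).congr'
      (Eventually.mono (hl f_diff) fun y hy => hy.deriv.symm)
  have left := hasDerivWithinAt_Iic_of_tendsto_deriv diff hf.continuousWithinAt
    (nhdsLT_le_nhdsNE x f_diff) (lim (nhdsLT_le_nhdsNE x))
  have right := hasDerivWithinAt_Ici_of_tendsto_deriv diff hf.continuousWithinAt
    (nhdsGT_le_nhdsNE x f_diff) (lim (nhdsGT_le_nhdsNE x))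
  simpa using left.union right

theorem eventually_le_iff_le_of_ne {α : Type*} [TopologicalSpace α] [LinearOrder α]
    [OrderTopology α] {a x : α} (h : a ≠ x) : ∀ᶠ y in 𝓝 x, (a ≤ y ↔ a ≤ x) := by
  rcases h.lt_or_gt with h | h
  · filter_upwards [eventually_gt_nhds h] with y hy
    simp [hy.le, h.le]
  · filter_upwards [eventually_lt_nhds h] with y hy
    simp [hy.not_ge, h.not_ge]

section Bspl

variable {t : ℕ → ℝ} {j k : ℕ} {x : ℝ}

theorem Bspl_zero : Bspl t j 0 = 0 := by
  funext x
  simp [Bspl]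

theorem Bspl_succ_succ : Bspl t j (k + 2) = fun x =>
    (x - t j) / (t (j + k + 1) - t j) * Bspl t j (k + 1) x
      + (t (j + k + 2) - x) / (t (j + k + 2) - t (j + 1)) * Bspl t (j + 1) (k + 1) x := by
  funext x
  simp [Bspl]

noncomputable def bsplDeriv (t : ℕ → ℝ) (j k : ℕ) (x : ℝ) : ℝ :=
  (k - 1 : ℝ) * (Bspl t j (k - 1) x / (t (j + k - 1) - t j)
    - Bspl t (j + 1) (k - 1) x / (t (j + k) - t (j + 1)))

theorem bsplDeriv_succ : bsplDeriv t j (k + 1) x =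
    k * (Bspl t j k x / (t (j + k) - t j) - Bspl t (j + 1) k x / (t (j + k + 1) - t (j + 1))) := by
  simp [bsplDeriv, ← add_assoc]

theorem hasDerivAt_Bspl_one (h₀ : x ≠ t j) (h₁ : x ≠ t (j + 1)) :
    HasDerivAt (Bspl t j 1) 0 x := by
  refine (hasDerivAt_const x (Bspl t j 1 x)).congr_of_eventuallyEq ?_
  filter_upwards [eventually_le_iff_le_of_ne h₀.symm, eventually_le_iff_le_of_ne h₁.symm]
    with y hy₀ hy₁
  simp only [Bspl, ← not_le, hy₀, hy₁]

/-- The derivative formula is compatible with the recurrence; this closes the induction. -/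
theorem mul_bsplDeriv_add_mul_bsplDeriv (ht : StrictMonoOn t (Icc j (j + k + 2))) :
    (x - t j) / (t (j + k + 1) - t j) * bsplDeriv t j (k + 1) x
      + (t (j + k + 2) - x) / (t (j + k + 2) - t (j + 1)) * bsplDeriv t (j + 1) (k + 1) x
      = k * (Bspl t j (k + 1) x / (t (j + k + 1) - t j)
        - Bspl t (j + 1) (k + 1) x / (t (j + k + 2) - t (j + 1))) := by
  rcases k with _ | n
  · simp [bsplDeriv_succ]
  have gap {a b : ℕ} (hja : j ≤ a) (hab : a < b) (hb : b ≤ j + n + 3) : t b - t a ≠ 0 :=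
    sub_ne_zero.2 (ht ⟨hja, by omega⟩ ⟨by omega, hb⟩ hab).ne'
  have h₀ := gap (a := j) (b := j + n + 2) le_rfl (by omega) (by omega)
  have h₁ := gap (a := j + 1) (b := j + n + 2) (by omega) (by omega) (by omega)
  have h₂ := gap (a := j + 1) (b := j + n + 3) (by omega) (by omega) (by omega)
  simp only [bsplDeriv_succ, Bspl_succ_succ]
  -- identifies `t (j + (n + 1) + 1)` with `t (j + n + 2)` etc., so `field_simp` sees the gaps
  ring_nf at h₀ h₁ h₂ ⊢
  field_simp
  ring

theorem hasDerivAt_Bspl_off_knots (ht : StrictMonoOn t (Icc j (j + k)))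
    (hx : x ∉ t '' Icc j (j + k)) : HasDerivAt (Bspl t j k) (bsplDeriv t j k x) x := by
  induction k generalizing j with
  | zero => simp [bsplDeriv, Bspl_zero]
  | succ k ih =>
    rcases k with _ | m
    · rw [bsplDeriv_succ, Nat.cast_zero, zero_mul]
      exact hasDerivAt_Bspl_one (fun h => hx ⟨j, by simp, h.symm⟩)
        (fun h => hx ⟨j + 1, by simp, h.symm⟩)
    have H₀ := ih (j := j) (ht.mono (Icc_subset_Icc le_rfl (by omega)))
      (fun h => hx (image_mono (Icc_subset_Icc le_rfl (by omega)) h))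
    have H₁ := ih (j := j + 1) (ht.mono (Icc_subset_Icc (by omega) (by omega)))
      (fun h => hx (image_mono (Icc_subset_Icc (by omega) (by omega)) h))
    rw [Bspl_succ_succ]
    refine ((((hasDerivAt_id' x).sub_const (t j)).div_const _).mul H₀).add
      ((((hasDerivAt_id' x).const_sub _).div_const _).mul H₁) |>.congr_deriv ?_
    have key := mul_bsplDeriv_add_mul_bsplDeriv (k := m) (x := x) ht
    rw [bsplDeriv_succ (k := m + 1)]
    push_cast
    linear_combination (norm := ring_nf) key

theorem continuousAt_Bspl_succ_succ (h₀ : ContinuousAt (Bspl t j (k + 1)) x)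
    (h₁ : ContinuousAt (Bspl t (j + 1) (k + 1)) x) : ContinuousAt (Bspl t j (k + 2)) x := by
  rw [Bspl_succ_succ]
  fun_prop

theorem continuousAt_bsplDeriv (h₀ : ContinuousAt (Bspl t j (k - 1)) x)
    (h₁ : ContinuousAt (Bspl t (j + 1) (k - 1)) x) : ContinuousAt (bsplDeriv t j k) x :=
  ((h₀.div_const _).sub (h₁.div_const _)).const_mul _

end Bspl

theorem stmt_12_general (t : ℕ → ℝ) (j k : ℕ) (hk : 2 ≤ k)
    (hstrict : ∀ i, j ≤ i → i < j + k → t i < t (i+1))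
    (θ : ℝ)
    (d1 d2 : ℝ)
    (hd1 : HasDerivAt (fun x => Bspl t j (k-1) x) d1 θ)
    (hd2 : HasDerivAt (fun x => Bspl t (j+1) (k-1) x) d2 θ) :
    HasDerivAt (fun x => Bspl t j k x)
      ((k - 1 : ℝ) * (Bspl t j (k-1) θ / (t (j+k-1) - t j)
        - Bspl t (j+1) (k-1) θ / (t (j+k) - t (j+1)))) θ := by
  have ht : StrictMonoOn t (Icc j (j + k)) :=
    strictMonoOn_of_lt_add_one ordConnected_Icc fun i _ hi hi' => hstrict i hi.1 (by
      simp only [mem_Icc] at hi'; omega)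
  have off_knots : ∀ᶠ y in 𝓝[≠] θ, HasDerivAt (Bspl t j k) (bsplDeriv t j k y) y := by
    filter_upwards [nhdsNE_of_nhdsNE_sdiff_finite univ_mem
      ((finite_Icc j (j + k)).image t).to_subtype] with y hy
    exact hasDerivAt_Bspl_off_knots ht hy.2
  obtain ⟨m, rfl⟩ : ∃ m, k = m + 2 := ⟨k - 2, by omega⟩
  exact hasDerivAt_of_eventually_hasDerivAt_of_ne off_knots
    (continuousAt_Bspl_succ_succ hd1.continuousAt hd2.continuousAt)
    (continuousAt_bsplDeriv hd1.continuousAt hd2.continuousAt)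

theorem stmt_12 (t : ℕ → ℝ) (j k : ℕ) (hk : 2 ≤ k)
    (hstrict : ∀ i, j ≤ i → i < j + k → t i < t (i+1))
    (θ : ℝ) (hθ : θ ∈ Set.Ioo (t j) (t (j+k)))
    (d1 d2 : ℝ)
    (hd1 : HasDerivAt (fun x => Bspl t j (k-1) x) d1 θ)
    (hd2 : HasDerivAt (fun x => Bspl t (j+1) (k-1) x) d2 θ) :
    HasDerivAt (fun x => Bspl t j k x)
      ((k - 1 : ℝ) * (Bspl t j (k-1) θ / (t (j+k-1) - t j)
        - Bspl t (j+1) (k-1) θ / (t (j+k) - t (j+1)))) θ :=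
  stmt_12_general t j k hk hstrict θ d1 d2 hd1 hd2
end

section
/- Let l ≥ 1, Δx > 0, and x_i = x_0 + iΔx for i = 0,...,l. Then for any x ∈ [x_0, x_l], ∏_{i=0}^{l} |x − x_i| ≤ (Δx)^{l+1} · l! / 4. -/
/-!
After rescaling to unit spacing it suffices to show `∏_{i=0}^{l} |t - i| ≤ l!/4` for
`t ∈ [0, l]`, by induction on `l ≥ 1`. For `l = 1` this is `t (1 - t) ≤ 1/4`. Passing from
`l` to `l + 1`, either `t ≤ l`, and the new last factor `|t - (l+1)|` is at most `l + 1`, or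
`t ≥ 1`, and shifting the nodes by one splits off the first factor `|t| ≤ l + 1`.
-/

open Finset
open scoped Nat

theorem prod_range_abs_sub_natCast_le {l : ℕ} (hl : 1 ≤ l) {t : ℝ} (ht₀ : 0 ≤ t)
    (htl : t ≤ l) :
    ∏ i ∈ range (l + 1), |t - i| ≤ (l ! : ℝ) / 4 := by
  induction l, hl using Nat.le_induction generalizing t with
  | base =>
    simp only [prod_range_succ, prod_range_zero, Nat.cast_zero, Nat.cast_one, sub_zero,
      one_mul, Nat.factorial_one]
    rw [abs_of_nonneg ht₀, abs_of_nonpos (by simpa using htl)]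
    nlinarith [sq_nonneg (t - 1 / 2)]
  | succ l hl ih =>
    have hfac : ((l + 1)! : ℝ) / 4 = (l ! : ℝ) / 4 * (l + 1) := by
      push_cast [Nat.factorial_succ]; ring
    rw [hfac]
    rcases le_total t l with htl' | hlt
    · rw [prod_range_succ]
      have hlast : |t - ↑(l + 1)| ≤ l + 1 := by
        rw [abs_of_nonpos (by push_cast; linarith)]; push_cast; linarith
      exact mul_le_mul (ih ht₀ htl') hlast (abs_nonneg _) (by positivity)
    · have hshift : ∀ i : ℕ, |t - ↑(i + 1)| = |(t - 1) - i| := fun i => by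
        push_cast; ring_nf
      have hfirst : |t - ↑(0 : ℕ)| ≤ l + 1 := by
        rw [Nat.cast_zero, sub_zero, abs_of_nonneg ht₀]; push_cast at htl; linarith
      rw [prod_range_succ', prod_congr rfl fun i _ => hshift i]
      have hl₁ : (1 : ℝ) ≤ l := by exact_mod_cast hl
      refine mul_le_mul (ih (by linarith) ?_) hfirst (abs_nonneg _) (by positivity)
      push_cast at htl; linarith

theorem prod_range_abs_sub_equispaced {Δx : ℝ} (hΔx : 0 < Δx) (x₀ x : ℝ) (n : ℕ) :
    ∏ i ∈ range n, |x - (x₀ + i * Δx)| = Δx ^ n * ∏ i ∈ range n, |(x - x₀) / Δx - i| := by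
  rw [pow_eq_prod_const, ← prod_mul_distrib]
  refine prod_congr rfl fun i _ => ?_
  rw [← abs_of_pos hΔx, ← abs_mul, abs_of_pos hΔx, mul_sub, mul_div_cancel₀ _ hΔx.ne']
  ring_nf

theorem stmt_15 (l : ℕ) (hl : 1 ≤ l) (Δx : ℝ) (hΔx : 0 < Δx) (x0 : ℝ)
    (x : ℝ) (hx : x ∈ Set.Icc x0 (x0 + l * Δx)) :
    (∏ i ∈ Finset.range (l+1), |x - (x0 + i * Δx)|) ≤
      Δx ^ (l+1) * (Nat.factorial l : ℝ) / 4 := by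
  obtain ⟨hx₀, hxl⟩ := hx
  have ht₀ : 0 ≤ (x - x0) / Δx := div_nonneg (by linarith) hΔx.le
  have htl : (x - x0) / Δx ≤ l := by rw [div_le_iff₀ hΔx]; linarith
  rw [prod_range_abs_sub_equispaced hΔx, mul_div_assoc]
  exact mul_le_mul_of_nonneg_left (prod_range_abs_sub_natCast_le hl ht₀ htl) (by positivity)
end
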